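/- arXiv:2305.12216 — 8 statements merged into one kernel-verified Lean document; each statement's English description precedes it below -/
import Mathlib

section
/- Let E = EuclideanSpace ℝ (Fin d) for a positive natural number d. If J : E → ℝ is differentiable with L̂-Lipschitz gradient (L̂ ≥ 0) and λ > L̂, then for every w ∈ E there exists a unique θ̂(w) ∈ E that globally maximizes θ ↦ J(θ) − (λ/2)‖θ − w‖²; i.e., there is exactly one θ̂(w) with J(θ̂(w)) − (λ/2)‖θ̂(w) − w‖² ≥ J(θ) − (λ/2)‖θ − w‖² for all θ ∈ E. -/
/-!
A `K`-Lipschitz gradient gives the quadratic upper bound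
`J θ ≤ J θ₀ + ⟪∇J θ₀, θ - θ₀⟫ + K/2 ‖θ - θ₀‖²`. At a critical point `θ₀` of
`F θ = J θ - λ/2 ‖θ - w‖²`, which exists because it is a fixed point of the contraction
`θ ↦ w + λ⁻¹ ∇J θ`, this bound becomes `F θ ≤ F θ₀ - (λ - K)/2 ‖θ - θ₀‖²`: `θ₀` is a
maximizer and every other point is strictly worse.
-/

open Set
open scoped Gradient RealInnerProductSpace NNReal

section

variable {E : Type*} [NormedAddCommGroup E] [InnerProductSpace ℝ E] [CompleteSpace E]
  {J : E → ℝ} {K : ℝ≥0}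

theorem le_add_inner_add_sq_of_lipschitzWith_gradient (hJ : Differentiable ℝ J)
    (hK : LipschitzWith K (∇ J)) (x y : E) :
    J y ≤ J x + ⟪∇ J x, y - x⟫ + K / 2 * ‖y - x‖ ^ 2 := by
  set h := y - x
  have hf : ∀ t : ℝ, HasDerivAt (fun s : ℝ => J (x + s • h) - s * ⟪∇ J x, h⟫)
      ⟪∇ J (x + t • h) - ∇ J x, h⟫ t := by
    intro t
    have hline : HasDerivAt (fun s : ℝ => x + s • h) h t := by
      simpa using ((hasDerivAt_id t).smul_const h).const_add x
    have hJt : HasDerivAt (fun s : ℝ => J (x + s • h)) ⟪∇ J (x + t • h), h⟫ t :=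
      (hJ _).hasGradientAt.hasFDerivAt.comp_hasDerivAt t hline
    rw [inner_sub_left]
    exact (hJt.sub ((hasDerivAt_id' t).mul_const ⟪∇ J x, h⟫)).congr_deriv (by rw [one_mul])
  have hB : ∀ t : ℝ, HasDerivAt (fun s : ℝ => J x + K / 2 * s ^ 2 * ‖h‖ ^ 2)
      (K * t * ‖h‖ ^ 2) t := by
    intro t
    refine ((((hasDerivAt_pow 2 t).const_mul (K / 2 : ℝ)).mul_const (‖h‖ ^ 2)).const_add
      (J x)).congr_deriv ?_
    push_cast
    ring
  have hbound : ∀ t ∈ Ico (0 : ℝ) 1, ⟪∇ J (x + t • h) - ∇ J x, h⟫ ≤ K * t * ‖h‖ ^ 2 := by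
    rintro t ⟨ht, -⟩
    calc _ ≤ ‖∇ J (x + t • h) - ∇ J x‖ * ‖h‖ := real_inner_le_norm _ _
      _ ≤ K * ‖x + t • h - x‖ * ‖h‖ := by gcongr; exact hK.norm_sub_le _ _
      _ = K * t * ‖h‖ ^ 2 := by
        rw [add_sub_cancel_left, norm_smul, Real.norm_of_nonneg ht]; ring
  have hcompare := image_le_of_deriv_right_le_deriv_boundary
    (HasDerivAt.continuousOn fun t _ => hf t) (fun t _ => (hf t).hasDerivWithinAt)
    (by simp) (HasDerivAt.continuousOn fun t _ => hB t) (fun t _ => (hB t).hasDerivWithinAt)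
    hbound (right_mem_Icc.2 zero_le_one)
  simp only [one_smul, one_mul, one_pow, add_sub_cancel, h] at hcompare
  linarith

theorem exists_gradient_eq_smul_sub (hK : LipschitzWith K (∇ J)) {lam : ℝ} (hlam : K < lam)
    (w : E) : ∃ θ, ∇ J θ = lam • (θ - w) := by
  have hlam₀ : 0 < lam := K.coe_nonneg.trans_lt hlam
  have hT : ContractingWith ⟨K / lam, by positivity⟩ fun θ => w + lam⁻¹ • ∇ J θ := by
    refine ⟨by exact_mod_cast (div_lt_one hlam₀).2 hlam,
      LipschitzWith.of_dist_le_mul fun a b => ?_⟩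
    rw [dist_eq_norm, dist_eq_norm, add_sub_add_left_eq_sub, ← smul_sub, norm_smul,
      Real.norm_of_nonneg (inv_nonneg.2 hlam₀.le)]
    change _ ≤ K / lam * _
    rw [div_eq_inv_mul, mul_assoc]
    exact mul_le_mul_of_nonneg_left (hK.norm_sub_le a b) (inv_nonneg.2 hlam₀.le)
  obtain ⟨θ, hθ, -⟩ := hT.exists_fixedPoint 0 (edist_ne_top _ _)
  refine ⟨θ, ?_⟩
  conv_rhs => rw [← hθ.eq, add_sub_cancel_left, smul_inv_smul₀ hlam₀.ne']

theorem sub_half_mul_norm_sq_le_of_gradient_eq (hJ : Differentiable ℝ J)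
    (hK : LipschitzWith K (∇ J)) {lam : ℝ} {w θ₀ : E} (hθ₀ : ∇ J θ₀ = lam • (θ₀ - w)) (θ : E) :
    J θ - lam / 2 * ‖θ - w‖ ^ 2 ≤
      J θ₀ - lam / 2 * ‖θ₀ - w‖ ^ 2 - (lam - K) / 2 * ‖θ - θ₀‖ ^ 2 := by
  have hdescent := le_add_inner_add_sq_of_lipschitzWith_gradient hJ hK θ₀ θ
  have hexpand := norm_add_sq_real (θ₀ - w) (θ - θ₀)
  rw [sub_add_sub_cancel'] at hexpand
  rw [hθ₀, real_inner_smul_left] at hdescent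
  rw [hexpand]
  linarith

end

theorem moreau_inner_exists_unique_maximizer_general
    (d : ℕ)
    (J : EuclideanSpace ℝ (Fin d) → ℝ) (Lhat lam : ℝ)
    (hLhat : 0 ≤ Lhat) (hJ : Differentiable ℝ J)
    (hLip : ∀ x y, ‖gradient J x - gradient J y‖ ≤ Lhat * ‖x - y‖)
    (hlam : Lhat < lam)
    (w : EuclideanSpace ℝ (Fin d)) :
    ∃! θhat : EuclideanSpace ℝ (Fin d),
      ∀ θ : EuclideanSpace ℝ (Fin d),
        J θ - lam / 2 * ‖θ - w‖ ^ 2 ≤ J θhat - lam / 2 * ‖θhat - w‖ ^ 2 := by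
  have hK : LipschitzWith ⟨Lhat, hLhat⟩ (∇ J) :=
    LipschitzWith.of_dist_le_mul fun x y => by
      rw [dist_eq_norm, dist_eq_norm]; exact hLip x y
  obtain ⟨θhat, hcrit⟩ := exists_gradient_eq_smul_sub hK hlam w
  have hgap : ∀ θ, J θ - lam / 2 * ‖θ - w‖ ^ 2 ≤
      J θhat - lam / 2 * ‖θhat - w‖ ^ 2 - (lam - Lhat) / 2 * ‖θ - θhat‖ ^ 2 :=
    sub_half_mul_norm_sq_le_of_gradient_eq hJ hK hcrit
  have hgap_pos : 0 < lam - Lhat := sub_pos.2 hlam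
  refine ⟨θhat, fun θ => (hgap θ).trans (sub_le_self _ (by positivity)), fun θ hθ => ?_⟩
  have hsq : ‖θ - θhat‖ ^ 2 ≤ 0 := by
    nlinarith [hgap θ, hθ θhat, sq_nonneg ‖θ - θhat‖]
  simpa [sub_eq_zero] using hsq

/-- Existence and uniqueness of the global maximizer of the inner
Moreau-envelope objective `θ ↦ J(θ) − (λ/2)‖θ − w‖²` when `∇J` is
`L̂`-Lipschitz and `λ > L̂`. -/
theorem moreau_inner_exists_unique_maximizer
    (d : ℕ) (hd : 0 < d)
    (J : EuclideanSpace ℝ (Fin d) → ℝ) (Lhat lam : ℝ)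
    (hLhat : 0 ≤ Lhat) (hJ : Differentiable ℝ J)
    (hLip : ∀ x y, ‖gradient J x - gradient J y‖ ≤ Lhat * ‖x - y‖)
    (hlam : Lhat < lam)
    (w : EuclideanSpace ℝ (Fin d)) :
    ∃! θhat : EuclideanSpace ℝ (Fin d),
      ∀ θ : EuclideanSpace ℝ (Fin d),
        J θ - lam / 2 * ‖θ - w‖ ^ 2 ≤ J θhat - lam / 2 * ‖θhat - w‖ ^ 2 :=
  moreau_inner_exists_unique_maximizer_general d J Lhat lam hLhat hJ hLip hlam w
end

section
/- Let E = EuclideanSpace ℝ (Fin d), J : E → ℝ differentiable with L̂-Lipschitz gradient, λ > L̂, V(w) = sup_{θ ∈ E} [J(θ) − (λ/2)‖θ − w‖²], and θ̂(w) the unique global maximizer of θ ↦ J(θ) − (λ/2)‖θ − w‖². Then V is differentiable on E and its gradient satisfies ∇V(w) = λ(θ̂(w) − w) for every w ∈ E. -/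
open InnerProductSpace Asymptotics
open scoped RealInnerProductSpace

/-!
With `f θ w = J θ - λ/2 ‖θ - w‖²` we have `V w = f (θ̂ w) w`. Comparing `V u` with `f (θ̂ w) u`
and `V w` with `f (θ̂ u) w` traps `V u - V w - ⟪λ (θ̂ w - w), u - w⟫` within
`|λ| (‖θ̂ u - θ̂ w‖ ‖u - w‖ + ‖u - w‖² / 2)`. The optimality condition
`∇J (θ̂ w) = λ (θ̂ w - w)`, the Lipschitz bound on `∇J` and `λ > L̂` make `θ̂` Lipschitz with
constant `|λ| / (λ - L̂)`, so this remainder is `O(‖u - w‖²)`.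
-/

section

variable {E : Type*} [NormedAddCommGroup E] [InnerProductSpace ℝ E]

theorem half_mul_norm_sub_sq_sub_half_mul_norm_sub_sq (lam : ℝ) (θ u w : E) :
    lam / 2 * ‖θ - w‖ ^ 2 - lam / 2 * ‖θ - u‖ ^ 2 =
      ⟪lam • (θ - w), u - w⟫ - lam / 2 * ‖u - w‖ ^ 2 := by
  rw [show θ - u = (θ - w) - (u - w) by abel, norm_sub_sq_real (θ - w) (u - w),
    real_inner_smul_left]
  ring

theorem abs_sub_sub_inner_le_of_forall_le {J : E → ℝ} {lam : ℝ} {a b u w : E}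
    (ha : ∀ θ, J θ - lam / 2 * ‖θ - w‖ ^ 2 ≤ J a - lam / 2 * ‖a - w‖ ^ 2)
    (hb : ∀ θ, J θ - lam / 2 * ‖θ - u‖ ^ 2 ≤ J b - lam / 2 * ‖b - u‖ ^ 2) :
    |(J b - lam / 2 * ‖b - u‖ ^ 2) - (J a - lam / 2 * ‖a - w‖ ^ 2) - ⟪lam • (a - w), u - w⟫|
      ≤ |lam| * ‖b - a‖ * ‖u - w‖ + |lam| / 2 * ‖u - w‖ ^ 2 := by
  have hlower := hb a
  have hupper := ha b
  have hdiff_a := half_mul_norm_sub_sq_sub_half_mul_norm_sub_sq lam a u w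
  have hdiff_b := half_mul_norm_sub_sq_sub_half_mul_norm_sub_sq lam b u w
  have hsplit : ⟪lam • (b - w), u - w⟫ = ⟪lam • (b - a), u - w⟫ + ⟪lam • (a - w), u - w⟫ := by
    rw [← inner_add_left, ← smul_add, sub_add_sub_cancel]
  have hcs : |⟪lam • (b - a), u - w⟫| ≤ |lam| * ‖b - a‖ * ‖u - w‖ := by
    simpa [norm_smul] using abs_real_inner_le_norm (lam • (b - a)) (u - w)
  have hsq : |lam / 2 * ‖u - w‖ ^ 2| = |lam| / 2 * ‖u - w‖ ^ 2 := by
    rw [abs_mul, abs_div, abs_two, abs_of_nonneg (by positivity : 0 ≤ ‖u - w‖ ^ 2)]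
  rw [abs_le]
  constructor <;> linarith [abs_le.1 hcs, abs_le.1 hsq.le]

end

section

variable {E : Type*} [NormedAddCommGroup E] [InnerProductSpace ℝ E] [CompleteSpace E]

theorem hasGradientAt_of_abs_sub_sub_inner_le_sq {f : E → ℝ} {g w : E} (C : ℝ)
    (h : ∀ u, |f u - f w - ⟪g, u - w⟫| ≤ C * ‖u - w‖ ^ 2) : HasGradientAt f g w := by
  rw [hasGradientAt_iff_isLittleO]
  refine (IsBigO.of_bound C (Filter.Eventually.of_forall fun u => ?_)).trans_isLittleO
    (isLittleO_pow_sub_sub w one_lt_two)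
  simpa using h u

theorem gradient_eq_smul_sub_of_forall_le {J : E → ℝ} {lam : ℝ} {m w : E}
    (hJ : DifferentiableAt ℝ J m)
    (hmax : ∀ θ, J θ - lam / 2 * ‖θ - w‖ ^ 2 ≤ J m - lam / 2 * ‖m - w‖ ^ 2) :
    gradient J m = lam • (m - w) := by
  have hderiv := hJ.hasFDerivAt.sub
    (((hasFDerivAt_id m).sub_const w).norm_sq.const_mul (lam / 2))
  have hzero := IsLocalMax.hasFDerivAt_eq_zero (Filter.Eventually.of_forall hmax) hderiv
  apply (toDual ℝ E).injective
  ext v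
  have hv := DFunLike.congr_fun hzero v
  simp only [id_eq, map_sub, ContinuousLinearMap.comp_id, sub_apply,
    smul_apply, coe_innerSL_apply, nsmul_eq_mul, Nat.cast_ofNat, smul_eq_mul,
    zero_apply] at hv
  simp only [toDual_gradient, map_smul, map_sub, smul_apply,
    sub_apply, toDual_apply_apply, smul_eq_mul]
  linarith

theorem norm_sub_le_of_gradient_eq_smul_sub {J : E → ℝ} {L lam : ℝ}
    (hLip : ∀ x y, ‖gradient J x - gradient J y‖ ≤ L * ‖x - y‖) (hlam : L < lam)
    {a b u w : E} (ha : gradient J a = lam • (a - u)) (hb : gradient J b = lam • (b - w)) :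
    ‖a - b‖ ≤ |lam| / (lam - L) * ‖u - w‖ := by
  have hsplit : lam • (a - b) = (gradient J a - gradient J b) + lam • (u - w) := by
    rw [ha, hb]; module
  have hle : lam * ‖a - b‖ ≤ L * ‖a - b‖ + |lam| * ‖u - w‖ :=
    calc lam * ‖a - b‖ ≤ ‖lam • (a - b)‖ := by
          rw [norm_smul, Real.norm_eq_abs]; gcongr; exact le_abs_self lam
      _ ≤ ‖gradient J a - gradient J b‖ + ‖lam • (u - w)‖ := hsplit ▸ norm_add_le _ _
      _ ≤ L * ‖a - b‖ + |lam| * ‖u - w‖ := by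
          rw [norm_smul, Real.norm_eq_abs]; gcongr; exact hLip a b
  rw [div_mul_eq_mul_div, le_div_iff₀ (sub_pos.2 hlam)]
  linarith

end

theorem moreau_envelope_differentiable_gradient_general
    (d : ℕ)
    (J : EuclideanSpace ℝ (Fin d) → ℝ) (Lhat lam : ℝ)
    (hJ : Differentiable ℝ J)
    (hLip : ∀ x y, ‖gradient J x - gradient J y‖ ≤ Lhat * ‖x - y‖)
    (hlam : Lhat < lam)
    (V : EuclideanSpace ℝ (Fin d) → ℝ)
    (hV : ∀ w, V w = ⨆ θ : EuclideanSpace ℝ (Fin d), (J θ - lam / 2 * ‖θ - w‖ ^ 2))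
    (θhat : EuclideanSpace ℝ (Fin d) → EuclideanSpace ℝ (Fin d))
    (hθhat : ∀ w θ : EuclideanSpace ℝ (Fin d),
      J θ - lam / 2 * ‖θ - w‖ ^ 2 ≤ J (θhat w) - lam / 2 * ‖θhat w - w‖ ^ 2) :
    Differentiable ℝ V ∧
      ∀ w : EuclideanSpace ℝ (Fin d), gradient V w = lam • (θhat w - w) := by
  have hVeq : V = fun w => J (θhat w) - lam / 2 * ‖θhat w - w‖ ^ 2 := funext fun w =>
    (hV w).trans <| ciSup_eq_of_forall_le_of_forall_lt_exists_gt (hθhat w) fun _ h => ⟨_, h⟩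
  have hstat (w) : gradient J (θhat w) = lam • (θhat w - w) :=
    gradient_eq_smul_sub_of_forall_le (hJ _) (hθhat w)
  set K := |lam| / (lam - Lhat)
  have hgrad (w) : HasGradientAt V (lam • (θhat w - w)) w := by
    refine hVeq ▸ hasGradientAt_of_abs_sub_sub_inner_le_sq (|lam| * K + |lam| / 2) fun u => ?_
    have hθ : ‖θhat u - θhat w‖ ≤ K * ‖u - w‖ :=
      norm_sub_le_of_gradient_eq_smul_sub hLip hlam (hstat u) (hstat w)
    calc _ ≤ |lam| * ‖θhat u - θhat w‖ * ‖u - w‖ + |lam| / 2 * ‖u - w‖ ^ 2 :=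
          abs_sub_sub_inner_le_of_forall_le (hθhat w) (hθhat u)
      _ ≤ |lam| * (K * ‖u - w‖) * ‖u - w‖ + |lam| / 2 * ‖u - w‖ ^ 2 := by gcongr
      _ = (|lam| * K + |lam| / 2) * ‖u - w‖ ^ 2 := by ring
  exact ⟨fun w => (hgrad w).differentiableAt, fun w => (hgrad w).gradient⟩

/-- Differentiability and gradient formula for the Moreau-envelope value
`V(w) = sup_θ [J(θ) − (λ/2)‖θ − w‖²]`: namely `∇V(w) = λ(θ̂(w) − w)`. -/
theorem moreau_envelope_differentiable_gradient
    (d : ℕ) (hd : 0 < d)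
    (J : EuclideanSpace ℝ (Fin d) → ℝ) (Lhat lam : ℝ)
    (hLhat : 0 ≤ Lhat) (hJ : Differentiable ℝ J)
    (hLip : ∀ x y, ‖gradient J x - gradient J y‖ ≤ Lhat * ‖x - y‖)
    (hlam : Lhat < lam)
    (V : EuclideanSpace ℝ (Fin d) → ℝ)
    (hV : ∀ w, V w = ⨆ θ : EuclideanSpace ℝ (Fin d), (J θ - lam / 2 * ‖θ - w‖ ^ 2))
    (θhat : EuclideanSpace ℝ (Fin d) → EuclideanSpace ℝ (Fin d))
    (hθhat : ∀ w θ : EuclideanSpace ℝ (Fin d),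
      J θ - lam / 2 * ‖θ - w‖ ^ 2 ≤ J (θhat w) - lam / 2 * ‖θhat w - w‖ ^ 2) :
    Differentiable ℝ V ∧
      ∀ w : EuclideanSpace ℝ (Fin d), gradient V w = lam • (θhat w - w) :=
  moreau_envelope_differentiable_gradient_general d J Lhat lam hJ hLip hlam V hV θhat hθhat
end

section
/- Let E = EuclideanSpace ℝ (Fin d), J : E → ℝ differentiable with L̂-Lipschitz gradient (L̂ ≥ 0), λ > L̂, and for each w ∈ E let θ̂(w) be the unique global maximizer of θ ↦ J(θ) − (λ/2)‖θ − w‖². Then the proximal map w ↦ θ̂(w) is Lipschitz with constant λ/(λ − L̂): for all w, v ∈ E, ‖θ̂(w) − θ̂(v)‖ ≤ (λ/(λ − L̂))‖w − v‖. -/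
/-!
Since θ̂(w) maximizes θ ↦ J θ − (λ/2)‖θ − w‖², the first-order condition gives
∇J(θ̂ w) = λ (θ̂ w − w). Subtracting the conditions at w and v,
λ (θ̂ w − θ̂ v) = λ (w − v) + (∇J(θ̂ w) − ∇J(θ̂ v)), so by the Lipschitz bound
λ ‖θ̂ w − θ̂ v‖ ≤ λ ‖w − v‖ + L̂ ‖θ̂ w − θ̂ v‖, and λ > L̂ lets us absorb the last term.
-/

variable {F : Type*} [NormedAddCommGroup F] [InnerProductSpace ℝ F]

theorem IsLocalMax.gradient_eq_smul_sub [CompleteSpace F] {J : F → ℝ} {lam : ℝ} {w u : F}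
    (hJ : DifferentiableAt ℝ J u)
    (hmax : IsLocalMax (fun θ => J θ - lam / 2 * ‖θ - w‖ ^ 2) u) :
    gradient J u = lam • (u - w) := by
  have hsq : HasFDerivAt (fun θ => ‖θ - w‖ ^ 2) (2 • innerSL ℝ (u - w)) u := by
    simpa using ((hasFDerivAt_id u).sub_const w).norm_sq
  have hcrit := hmax.hasFDerivAt_eq_zero (hJ.hasFDerivAt.sub (hsq.const_mul (lam / 2)))
  refine ext_inner_right ℝ fun y => ?_
  have hy := congrArg (· y) hcrit
  simp only [sub_apply, smul_apply, coe_innerSL_apply, nsmul_eq_mul, Nat.cast_ofNat, smul_eq_mul,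
    zero_apply] at hy
  rw [inner_gradient_left, real_inner_smul_left]
  linarith

theorem norm_sub_le_of_eq_smul_sub {G : F → F} {L lam : ℝ} {a b w v : F}
    (hG : ‖G a - G b‖ ≤ L * ‖a - b‖) (hL : 0 ≤ L) (hlam : L < lam)
    (ha : G a = lam • (a - w)) (hb : G b = lam • (b - v)) :
    ‖a - b‖ ≤ lam / (lam - L) * ‖w - v‖ := by
  have hlam0 : 0 < lam := hL.trans_lt hlam
  have hsplit : lam • (a - b) = lam • (w - v) + (G a - G b) := by
    rw [ha, hb]; module
  have key : lam * ‖a - b‖ ≤ lam * ‖w - v‖ + L * ‖a - b‖ := by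
    calc lam * ‖a - b‖ = ‖lam • (a - b)‖ := by rw [norm_smul, Real.norm_of_nonneg hlam0.le]
      _ ≤ ‖lam • (w - v)‖ + ‖G a - G b‖ := hsplit ▸ norm_add_le _ _
      _ ≤ lam * ‖w - v‖ + L * ‖a - b‖ := by
        rw [norm_smul, Real.norm_of_nonneg hlam0.le]; gcongr
  rw [div_mul_eq_mul_div, le_div_iff₀ (sub_pos.mpr hlam)]
  linarith

theorem moreau_proximal_map_lipschitz_general
    (d : ℕ)
    (J : EuclideanSpace ℝ (Fin d) → ℝ) (Lhat lam : ℝ)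
    (hLhat : 0 ≤ Lhat) (hJ : Differentiable ℝ J)
    (hLip : ∀ x y, ‖gradient J x - gradient J y‖ ≤ Lhat * ‖x - y‖)
    (hlam : Lhat < lam)
    (θhat : EuclideanSpace ℝ (Fin d) → EuclideanSpace ℝ (Fin d))
    (hθhat : ∀ w θ : EuclideanSpace ℝ (Fin d),
      J θ - lam / 2 * ‖θ - w‖ ^ 2 ≤ J (θhat w) - lam / 2 * ‖θhat w - w‖ ^ 2) :
    ∀ w v : EuclideanSpace ℝ (Fin d),
      ‖θhat w - θhat v‖ ≤ lam / (lam - Lhat) * ‖w - v‖ := by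
  have hcrit (w : EuclideanSpace ℝ (Fin d)) : gradient J (θhat w) = lam • (θhat w - w) :=
    IsLocalMax.gradient_eq_smul_sub (hJ _) (Filter.Eventually.of_forall (hθhat w))
  exact fun w v => norm_sub_le_of_eq_smul_sub (hLip _ _) hLhat hlam (hcrit w) (hcrit v)

/-- The proximal map `w ↦ θ̂(w)` is `λ/(λ − L̂)`-Lipschitz. -/
theorem moreau_proximal_map_lipschitz
    (d : ℕ) (hd : 0 < d)
    (J : EuclideanSpace ℝ (Fin d) → ℝ) (Lhat lam : ℝ)
    (hLhat : 0 ≤ Lhat) (hJ : Differentiable ℝ J)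
    (hLip : ∀ x y, ‖gradient J x - gradient J y‖ ≤ Lhat * ‖x - y‖)
    (hlam : Lhat < lam)
    (θhat : EuclideanSpace ℝ (Fin d) → EuclideanSpace ℝ (Fin d))
    (hθhat : ∀ w θ : EuclideanSpace ℝ (Fin d),
      J θ - lam / 2 * ‖θ - w‖ ^ 2 ≤ J (θhat w) - lam / 2 * ‖θhat w - w‖ ^ 2) :
    ∀ w v : EuclideanSpace ℝ (Fin d),
      ‖θhat w - θhat v‖ ≤ lam / (lam - Lhat) * ‖w - v‖ :=
  moreau_proximal_map_lipschitz_general d J Lhat lam hLhat hJ hLip hlam θhat hθhat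
end

section
/- Let E = EuclideanSpace ℝ (Fin d), J : E → ℝ differentiable with L̂-Lipschitz gradient (L̂ ≥ 0), λ > L̂, and for w ∈ E let θ̂(w) be the unique global maximizer of θ ↦ J(θ) − (λ/2)‖θ − w‖². Then for every θ̃ ∈ E, the distance to the maximizer is controlled by the residual gradient: ‖θ̃ − θ̂(w)‖ ≤ ‖∇J(θ̃) − λ(θ̃ − w)‖ / (λ − L̂). -/
open InnerProductSpace

/-!
At the maximizer `θ̂` the first-order condition reads `∇J(θ̂) = λ(θ̂ − w)`. Subtracting it from the
residual `r = ∇J(θ̃) − λ(θ̃ − w)` gives `λ(θ̃ − θ̂) = (∇J(θ̃) − ∇J(θ̂)) − r`, and the Lipschitz bound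
on `∇J` turns this into `(λ − L̂)‖θ̃ − θ̂‖ ≤ ‖r‖`.
-/

section FirstOrder

variable {E : Type*} [NormedAddCommGroup E] [InnerProductSpace ℝ E] [CompleteSpace E]

theorem hasFDerivAt_half_mul_norm_sub_sq (lam : ℝ) (w x : E) :
    HasFDerivAt (fun y => lam / 2 * ‖y - w‖ ^ 2) (toDual ℝ E (lam • (x - w))) x := by
  refine (((hasFDerivAt_id x).sub_const w).norm_sq.const_mul (lam / 2)).congr_fderiv ?_
  ext v
  simp only [id_eq, map_sub, ContinuousLinearMap.comp_id, smul_apply,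
    sub_apply, coe_innerSL_apply, nsmul_eq_mul, Nat.cast_ofNat, smul_eq_mul,
    map_smul, toDual_apply_apply]
  ring

theorem gradient_eq_smul_sub_of_isLocalMax {f : E → ℝ} {lam : ℝ} {w x₀ : E}
    (hf : DifferentiableAt ℝ f x₀)
    (hmax : IsLocalMax (fun x => f x - lam / 2 * ‖x - w‖ ^ 2) x₀) :
    gradient f x₀ = lam • (x₀ - w) := by
  have h := hmax.hasFDerivAt_eq_zero
    (hf.hasGradientAt.hasFDerivAt.sub (hasFDerivAt_half_mul_norm_sub_sq lam w x₀))
  rwa [← map_sub, LinearIsometryEquiv.map_eq_zero_iff, sub_eq_zero] at h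

end FirstOrder

theorem sub_mul_norm_sub_le_norm_sub_smul {E : Type*} [NormedAddCommGroup E] [NormedSpace ℝ E]
    {g : E → E} {L lam : ℝ} (hg : ∀ x y, ‖g x - g y‖ ≤ L * ‖x - y‖) {w x₀ : E}
    (hx₀ : g x₀ = lam • (x₀ - w)) (x : E) :
    (lam - L) * ‖x - x₀‖ ≤ ‖g x - lam • (x - w)‖ := by
  have hsplit : lam • (x - x₀) = (g x - g x₀) - (g x - lam • (x - w)) := by
    rw [hx₀]; module
  have : lam * ‖x - x₀‖ ≤ L * ‖x - x₀‖ + ‖g x - lam • (x - w)‖ :=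
    calc lam * ‖x - x₀‖ ≤ |lam| * ‖x - x₀‖ := by gcongr; exact le_abs_self lam
      _ = ‖(g x - g x₀) - (g x - lam • (x - w))‖ := by rw [← hsplit, norm_smul, Real.norm_eq_abs]
      _ ≤ ‖g x - g x₀‖ + ‖g x - lam • (x - w)‖ := norm_sub_le _ _
      _ ≤ L * ‖x - x₀‖ + ‖g x - lam • (x - w)‖ := by gcongr; exact hg x x₀
  linarith

theorem moreau_distance_to_maximizer_bound_general
    (d : ℕ)
    (J : EuclideanSpace ℝ (Fin d) → ℝ) (Lhat lam : ℝ)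
    (hJ : Differentiable ℝ J)
    (hLip : ∀ x y, ‖gradient J x - gradient J y‖ ≤ Lhat * ‖x - y‖)
    (hlam : Lhat < lam)
    (w : EuclideanSpace ℝ (Fin d))
    (θhat : EuclideanSpace ℝ (Fin d))
    (hθhat : ∀ θ : EuclideanSpace ℝ (Fin d),
      J θ - lam / 2 * ‖θ - w‖ ^ 2 ≤ J θhat - lam / 2 * ‖θhat - w‖ ^ 2) :
    ∀ θtil : EuclideanSpace ℝ (Fin d),
      ‖θtil - θhat‖ ≤ ‖gradient J θtil - lam • (θtil - w)‖ / (lam - Lhat) := by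
  have hstat : gradient J θhat = lam • (θhat - w) :=
    gradient_eq_smul_sub_of_isLocalMax (hJ θhat) (Filter.Eventually.of_forall hθhat)
  intro θtil
  rw [le_div_iff₀ (sub_pos.mpr hlam), mul_comm]
  exact sub_mul_norm_sub_le_norm_sub_smul hLip hstat θtil

/-- Distance to the maximizer of the inner Moreau objective is controlled by
the residual gradient: `‖θ̃ − θ̂(w)‖ ≤ ‖∇J(θ̃) − λ(θ̃ − w)‖ / (λ − L̂)`. -/
theorem moreau_distance_to_maximizer_bound
    (d : ℕ) (hd : 0 < d)
    (J : EuclideanSpace ℝ (Fin d) → ℝ) (Lhat lam : ℝ)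
    (hLhat : 0 ≤ Lhat) (hJ : Differentiable ℝ J)
    (hLip : ∀ x y, ‖gradient J x - gradient J y‖ ≤ Lhat * ‖x - y‖)
    (hlam : Lhat < lam)
    (w : EuclideanSpace ℝ (Fin d))
    (θhat : EuclideanSpace ℝ (Fin d))
    (hθhat : ∀ θ : EuclideanSpace ℝ (Fin d),
      J θ - lam / 2 * ‖θ - w‖ ^ 2 ≤ J θhat - lam / 2 * ‖θhat - w‖ ^ 2) :
    ∀ θtil : EuclideanSpace ℝ (Fin d),
      ‖θtil - θhat‖ ≤ ‖gradient J θtil - lam • (θtil - w)‖ / (lam - Lhat) :=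
  moreau_distance_to_maximizer_bound_general d J Lhat lam hJ hLip hlam w θhat hθhat
end

section
/- Let E = EuclideanSpace ℝ (Fin d), J : E → ℝ differentiable with L̂-Lipschitz gradient satisfying ‖∇J(θ)‖ ≤ Ĝ for all θ ∈ E, λ > L̂, and for w ∈ E let θ̂(w) be the unique global maximizer of θ ↦ J(θ) − (λ/2)‖θ − w‖². Then the proximal point stays close to w: ‖θ̂(w) − w‖ ≤ Ĝ/λ for every w ∈ E. -/
open InnerProductSpace Filter Topology


/-- The proximal point stays close to the reference point:
`‖θ̂(w) − w‖ ≤ Ĝ/λ` whenever `‖∇J‖ ≤ Ĝ` everywhere. -/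
theorem moreau_proximal_point_close
    (d : ℕ) (hd : 0 < d)
    (J : EuclideanSpace ℝ (Fin d) → ℝ) (Lhat Ghat lam : ℝ)
    (hLhat : 0 ≤ Lhat) (hJ : Differentiable ℝ J)
    (hLip : ∀ x y, ‖gradient J x - gradient J y‖ ≤ Lhat * ‖x - y‖)
    (hG : ∀ θ : EuclideanSpace ℝ (Fin d), ‖gradient J θ‖ ≤ Ghat)
    (hlam : Lhat < lam)
    (θhat : EuclideanSpace ℝ (Fin d) → EuclideanSpace ℝ (Fin d))
    (hθhat : ∀ w θ : EuclideanSpace ℝ (Fin d),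
      J θ - lam / 2 * ‖θ - w‖ ^ 2 ≤ J (θhat w) - lam / 2 * ‖θhat w - w‖ ^ 2) :
    ∀ w : EuclideanSpace ℝ (Fin d), ‖θhat w - w‖ ≤ Ghat / lam := by
  intro w
  have hlam0 : 0 < lam := lt_of_le_of_lt hLhat hlam
  have hG0 : 0 ≤ Ghat := le_trans (norm_nonneg _) (hG 0)
  -- fderiv norm equals gradient norm
  have hfd : ∀ x, ‖fderiv ℝ J x‖ ≤ Ghat := by
    intro x
    have : gradient J x = (toDual ℝ _).symm (fderiv ℝ J x) := rfl
    have h2 := hG x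
    rwa [this, LinearIsometryEquiv.norm_map] at h2
  -- J is Ghat-Lipschitz
  have hLipJ : ∀ x y : EuclideanSpace ℝ (Fin d), ‖J x - J y‖ ≤ Ghat * ‖x - y‖ := by
    intro x y
    exact (convex_univ).norm_image_sub_le_of_norm_fderiv_le
      (fun z _ => hJ z) (fun z _ => hfd z)
      (Set.mem_univ y) (Set.mem_univ x)
  set r := ‖θhat w - w‖ with hr
  have hr0 : 0 ≤ r := norm_nonneg _
  -- key inequality for t ∈ [0,1)
  have key : ∀ t : ℝ, 0 ≤ t → t < 1 → lam * (1 + t) / 2 * r ^ 2 ≤ Ghat * r := by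
    intro t ht0 ht1
    set θt : EuclideanSpace ℝ (Fin d) := w + t • (θhat w - w) with hθt
    have h1 : θt - w = t • (θhat w - w) := by rw [hθt]; abel
    have h2 : θhat w - θt = (1 - t) • (θhat w - w) := by
      rw [hθt, sub_smul, one_smul]; abel
    have hn1 : ‖θt - w‖ = t * r := by rw [h1, norm_smul, Real.norm_of_nonneg ht0]
    have hn2 : ‖θhat w - θt‖ = (1 - t) * r := by
      rw [h2, norm_smul, Real.norm_of_nonneg (by linarith)]
    have hmax := hθhat w θt
    have hlipJ := hLipJ (θhat w) θt
    have habs : J (θhat w) - J θt ≤ Ghat * ((1 - t) * r) := by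
      calc J (θhat w) - J θt ≤ ‖J (θhat w) - J θt‖ := le_abs_self _
        _ ≤ Ghat * ‖θhat w - θt‖ := hLipJ _ _
        _ = Ghat * ((1 - t) * r) := by rw [hn2]
    have h3 : lam / 2 * r ^ 2 - lam / 2 * (t * r) ^ 2 ≤ Ghat * ((1 - t) * r) := by
      have := hmax
      rw [hn1] at this
      linarith
    have hexp : lam / 2 * r ^ 2 - lam / 2 * (t * r) ^ 2
        = (1 - t) * (lam * (1 + t) / 2 * r ^ 2) := by ring
    have h4 : (1 - t) * (lam * (1 + t) / 2 * r ^ 2) ≤ (1 - t) * (Ghat * r) := by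
      rw [← hexp]; linarith [h3]
    exact le_of_mul_le_mul_left (by linarith [h4]) (by linarith : (0:ℝ) < 1 - t)
  -- take limit t → 1⁻
  have hlim : lam * r ^ 2 ≤ Ghat * r := by
    have htend : Tendsto (fun t : ℝ => lam * (1 + t) / 2 * r ^ 2) (𝓝[<] (1:ℝ))
        (𝓝 (lam * (1 + 1) / 2 * r ^ 2)) := by
      apply Tendsto.mono_left _ nhdsWithin_le_nhds
      exact Continuous.tendsto (by continuity) 1
    have : lam * (1 + 1) / 2 * r ^ 2 = lam * r ^ 2 := by ring
    rw [this] at htend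
    refine le_of_tendsto htend ?_
    filter_upwards [Ioo_mem_nhdsLT_of_mem (by norm_num : (1:ℝ) ∈ Set.Ioc 0 1)]
      with t ht
    exact key t (le_of_lt ht.1) ht.2
  rcases eq_or_lt_of_le hr0 with h | h
  · rw [← h]; positivity
  · rw [le_div_iff₀ hlam0]
    have : lam * r ≤ Ghat := by
      have := hlim
      nlinarith
    linarith
end

section
/- Let E be a real inner product space and V : E → ℝ differentiable with L̃-Lipschitz gradient. Fix w ∈ E, a step size α > 0, a bias bound δ ≥ 0, and a vector g ∈ E with ‖g − ∇V(w)‖ ≤ δ. Then the inexact gradient-ascent step satisfies V(w + αg) ≥ V(w) + (α/2 − α²L̃)‖∇V(w)‖² − (α/2 + α²L̃)δ². -/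
/-!
The step `d = α • g` is controlled by the quadratic lower bound
`V (x + d) ≥ V x + ⟪∇V x, d⟫ - L̃/2 ‖d‖²` of an `L̃`-smooth function; it holds because
`t ↦ V (x + t • d) - t ⟪∇V x, d⟫ + L̃/2 t² ‖d‖²` has nonnegative derivative for `t ≥ 0`.
The inexactness of `g` enters only through `‖∇V w‖² - δ² ≤ 2 ⟪∇V w, g⟫` (polarization) and
`‖g‖² ≤ 2 (‖∇V w‖² + δ²)` (parallelogram law).
-/

open scoped Gradient RealInnerProductSpace

section

variable {E : Type*} [NormedAddCommGroup E] [InnerProductSpace ℝ E]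

theorem sq_norm_sub_sq_le_two_mul_inner {u v : E} {δ : ℝ} (h : ‖v - u‖ ≤ δ) :
    ‖u‖ ^ 2 - δ ^ 2 ≤ 2 * ⟪u, v⟫ := by
  have hδ : ‖v - u‖ ^ 2 ≤ δ ^ 2 := pow_le_pow_left₀ (norm_nonneg _) h 2
  nlinarith [norm_sub_sq_real v u, real_inner_comm u v, sq_nonneg ‖v‖]

theorem sq_norm_le_of_norm_sub_le {u v : E} {δ : ℝ} (h : ‖v - u‖ ≤ δ) :
    ‖v‖ ^ 2 ≤ 2 * (‖u‖ ^ 2 + δ ^ 2) := by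
  have hδ : ‖v - u‖ ^ 2 ≤ δ ^ 2 := pow_le_pow_left₀ (norm_nonneg _) h 2
  have hpar := parallelogram_law_with_norm ℝ u (v - u)
  rw [add_sub_cancel] at hpar
  nlinarith [sq_nonneg ‖u - (v - u)‖]

variable [CompleteSpace E]

theorem hasDerivAt_comp_add_smul {V : E → ℝ} (hV : Differentiable ℝ V) (x d : E) (t : ℝ) :
    HasDerivAt (fun s : ℝ => V (x + s • d)) ⟪∇ V (x + t • d), d⟫ t := by
  have hline : HasDerivAt (fun s : ℝ => x + s • d) d t := by
    simpa using ((hasDerivAt_id t).smul_const d).const_add x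
  simpa [Function.comp_def] using
    (hV _).hasGradientAt.hasFDerivAt.comp_hasDerivAt t hline

theorem neg_mul_sq_le_inner_gradient_sub {V : E → ℝ} {L : ℝ}
    (hLip : ∀ x y, ‖∇ V x - ∇ V y‖ ≤ L * ‖x - y‖) (x d : E) {t : ℝ} (ht : 0 ≤ t) :
    -(L * t * ‖d‖ ^ 2) ≤ ⟪∇ V (x + t • d) - ∇ V x, d⟫ := by
  have hbound : ‖∇ V (x + t • d) - ∇ V x‖ * ‖d‖ ≤ L * t * ‖d‖ ^ 2 :=
    calc ‖∇ V (x + t • d) - ∇ V x‖ * ‖d‖ ≤ L * ‖x + t • d - x‖ * ‖d‖ := by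
          gcongr; exact hLip _ _
      _ = L * t * ‖d‖ ^ 2 := by
          rw [add_sub_cancel_left, norm_smul, Real.norm_of_nonneg ht]; ring
  exact (neg_le_neg hbound).trans (neg_le_of_abs_le (abs_real_inner_le_norm _ _))

theorem quadratic_lower_bound_of_lipschitz_gradient {V : E → ℝ} {L : ℝ}
    (hV : Differentiable ℝ V) (hLip : ∀ x y, ‖∇ V x - ∇ V y‖ ≤ L * ‖x - y‖) (x d : E) :
    V x + ⟪∇ V x, d⟫ - L / 2 * ‖d‖ ^ 2 ≤ V (x + d) := by
  set h : ℝ → ℝ := fun t => V (x + t • d) - t * ⟪∇ V x, d⟫ + L / 2 * t ^ 2 * ‖d‖ ^ 2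
  have hderiv : ∀ t, HasDerivAt h (⟪∇ V (x + t • d) - ∇ V x, d⟫ + L * t * ‖d‖ ^ 2) t := by
    intro t
    have := ((hasDerivAt_comp_add_smul hV x d t).sub ((hasDerivAt_id t).mul_const
      ⟪∇ V x, d⟫)).add (((hasDerivAt_pow 2 t).const_mul (L / 2)).mul_const (‖d‖ ^ 2))
    refine this.congr_deriv ?_
    rw [inner_sub_left]; push_cast; ring
  have hmono : MonotoneOn h (Set.Ici 0) :=
    monotoneOn_of_hasDerivWithinAt_nonneg (convex_Ici 0)
      (fun t _ => (hderiv t).continuousAt.continuousWithinAt)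
      (fun t _ => (hderiv t).hasDerivWithinAt)
      (fun t ht => by
        rw [interior_Ici] at ht
        linarith [neg_mul_sq_le_inner_gradient_sub hLip x d ht.le])
  have h01 : h 0 ≤ h 1 := hmono Set.self_mem_Ici (Set.mem_Ici.mpr zero_le_one) zero_le_one
  simp only [h, zero_smul, add_zero, one_smul, zero_mul, sub_zero, one_pow, mul_one, one_mul,
    ne_eq, OfNat.ofNat_ne_zero, not_false_eq_true, zero_pow] at h01
  linarith

end

theorem inexact_gradient_ascent_step_general
    {E : Type*} [NormedAddCommGroup E] [InnerProductSpace ℝ E] [CompleteSpace E]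
    (V : E → ℝ) (Ltil : ℝ) (hLtil : 0 ≤ Ltil)
    (hV : Differentiable ℝ V)
    (hLip : ∀ x y, ‖gradient V x - gradient V y‖ ≤ Ltil * ‖x - y‖)
    (w g : E) (α δ : ℝ) (hα : 0 < α)
    (hg : ‖g - gradient V w‖ ≤ δ) :
    V w + (α / 2 - α ^ 2 * Ltil) * ‖gradient V w‖ ^ 2
        - (α / 2 + α ^ 2 * Ltil) * δ ^ 2 ≤ V (w + α • g) := by
  have hstep := quadratic_lower_bound_of_lipschitz_gradient hV hLip w (α • g)
  rw [real_inner_smul_right, norm_smul, Real.norm_of_nonneg hα.le, mul_pow] at hstep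
  have hinner := mul_le_mul_of_nonneg_left (sq_norm_sub_sq_le_two_mul_inner hg) hα.le
  have hnorm := mul_le_mul_of_nonneg_left (sq_norm_le_of_norm_sub_le hg)
    (mul_nonneg hLtil (sq_nonneg α))
  nlinarith

/-- Ascent guarantee for one inexact gradient-ascent step on an `L̃`-smooth
function: `V(w + αg) ≥ V(w) + (α/2 − α²L̃)‖∇V(w)‖² − (α/2 + α²L̃)δ²`. -/
theorem inexact_gradient_ascent_step
    {E : Type*} [NormedAddCommGroup E] [InnerProductSpace ℝ E] [CompleteSpace E]
    (V : E → ℝ) (Ltil : ℝ) (hLtil : 0 ≤ Ltil)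
    (hV : Differentiable ℝ V)
    (hLip : ∀ x y, ‖gradient V x - gradient V y‖ ≤ Ltil * ‖x - y‖)
    (w g : E) (α δ : ℝ) (hα : 0 < α) (hδ : 0 ≤ δ)
    (hg : ‖g - gradient V w‖ ≤ δ) :
    V w + (α / 2 - α ^ 2 * Ltil) * ‖gradient V w‖ ^ 2
        - (α / 2 + α ^ 2 * Ltil) * δ ^ 2 ≤ V (w + α • g) :=
  inexact_gradient_ascent_step_general V Ltil hLtil hV hLip w g α δ hα hg
end

section
/- Let E be a real inner product space and V : E → ℝ differentiable with L̃-Lipschitz gradient (L̃ > 0) and bounded above by V_max. Let δ ≥ 0, let 0 < α ≤ 1/(4L̃), and let (w^t)_{t≥0} be a sequence in E such that w^{t+1} = w^t + α g^t with ‖g^t − ∇V(w^t)‖ ≤ δ for every t. Then for every positive integer T, (1/T) Σ_{t=0}^{T−1} ‖∇V(w^t)‖² ≤ 4(V_max − V(w⁰))/(αT) + 3δ². -/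
/-!
Along the segment `s ↦ x + s • u`, the Lipschitz bound on `∇V` gives the descent-lemma inequality
`V (x + u) ≥ V x + ⟪∇V x, u⟫ - L/2 ‖u‖²`. For an ascent step `u = α • g` with `α L ≤ 1`, the
polarization identity `2⟪∇V w, g⟫ - ‖g‖² = ‖∇V w‖² - ‖g - ∇V w‖²` turns this into an increase of
`V` by at least `α/2 (‖∇V w‖² - δ²)`. Summing over `t < T` telescopes, and `V ≤ V_max` yields
`(1/T) Σ ‖∇V(wᵗ)‖² ≤ 2 (V_max - V w⁰)/(α T) + δ²`, which implies the stated bound since `V w⁰ ≤ V_max`.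
-/

open InnerProductSpace Set

section

variable {E : Type*} [NormedAddCommGroup E] [InnerProductSpace ℝ E] [CompleteSpace E]
  {V : E → ℝ} {L : ℝ}

theorem add_inner_gradient_sub_le_of_lipschitz_gradient (hV : Differentiable ℝ V)
    (hLip : ∀ x y, ‖gradient V x - gradient V y‖ ≤ L * ‖x - y‖) (x u : E) :
    V x + ⟪gradient V x, u⟫_ℝ - L / 2 * ‖u‖ ^ 2 ≤ V (x + u) := by
  set φ : ℝ → ℝ := fun s => V (x + s • u) - s * ⟪gradient V x, u⟫_ℝ + L / 2 * s ^ 2 * ‖u‖ ^ 2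
  have hφ' : ∀ s, HasDerivAt φ
      (⟪gradient V (x + s • u) - gradient V x, u⟫_ℝ + L * s * ‖u‖ ^ 2) s := by
    intro s
    have hline : HasDerivAt (fun s : ℝ => x + s • u) u s := by
      simpa using ((hasDerivAt_id s).smul_const u).const_add x
    have hVline := (hV (x + s • u)).hasGradientAt.hasFDerivAt.comp_hasDerivAt s hline
    refine ((hVline.sub ((hasDerivAt_id s).mul_const ⟪gradient V x, u⟫_ℝ)).add
      (((hasDerivAt_pow 2 s).const_mul (L / 2)).mul_const (‖u‖ ^ 2))).congr_deriv ?_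
    simp only [toDual_apply_apply, inner_sub_left]
    ring
  have hmono : MonotoneOn φ (Ici 0) := by
    refine monotoneOn_of_hasDerivWithinAt_nonneg (convex_Ici 0)
      (fun s _ => (hφ' s).continuousAt.continuousWithinAt)
      (fun s _ => (hφ' s).hasDerivWithinAt) fun s hs => ?_
    rw [interior_Ici, mem_Ioi] at hs
    have hslope : -⟪gradient V (x + s • u) - gradient V x, u⟫_ℝ ≤ L * s * ‖u‖ ^ 2 :=
      calc -⟪gradient V (x + s • u) - gradient V x, u⟫_ℝ
          ≤ ‖gradient V (x + s • u) - gradient V x‖ * ‖u‖ :=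
            (neg_le_abs _).trans (abs_real_inner_le_norm _ _)
        _ ≤ L * ‖x + s • u - x‖ * ‖u‖ := by gcongr; exact hLip _ _
        _ = L * s * ‖u‖ ^ 2 := by
            rw [add_sub_cancel_left, norm_smul, Real.norm_of_nonneg hs.le]; ring
    linarith
  have h01 : φ 0 ≤ φ 1 := hmono self_mem_Ici (mem_Ici.2 zero_le_one) zero_le_one
  simp only [φ, zero_smul, one_smul, add_zero, zero_mul, one_mul, sub_zero, one_pow,
    zero_pow two_ne_zero, mul_zero] at h01
  linarith

theorem add_half_mul_sub_le_of_inexact_gradient_step {α δ : ℝ} (hV : Differentiable ℝ V)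
    (hLip : ∀ x y, ‖gradient V x - gradient V y‖ ≤ L * ‖x - y‖)
    (hα0 : 0 ≤ α) (hαL : α * L ≤ 1) {w g : E} (hg : ‖g - gradient V w‖ ≤ δ) :
    V w + α / 2 * (‖gradient V w‖ ^ 2 - δ ^ 2) ≤ V (w + α • g) := by
  have hpolar : 2 * ⟪gradient V w, g⟫_ℝ - ‖g‖ ^ 2
      = ‖gradient V w‖ ^ 2 - ‖g - gradient V w‖ ^ 2 := by
    rw [norm_sub_sq_real, real_inner_comm]; ring
  have herr : ‖g - gradient V w‖ ^ 2 ≤ δ ^ 2 := pow_le_pow_left₀ (norm_nonneg _) hg 2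
  have hcurv : L / 2 * ‖α • g‖ ^ 2 ≤ α / 2 * ‖g‖ ^ 2 := by
    rw [norm_smul, Real.norm_of_nonneg hα0]
    nlinarith [mul_le_mul_of_nonneg_right hαL (mul_nonneg hα0 (sq_nonneg ‖g‖))]
  calc V w + α / 2 * (‖gradient V w‖ ^ 2 - δ ^ 2)
      ≤ V w + α / 2 * (2 * ⟪gradient V w, g⟫_ℝ - ‖g‖ ^ 2) := by rw [hpolar]; gcongr
    _ ≤ V w + ⟪gradient V w, α • g⟫_ℝ - L / 2 * ‖α • g‖ ^ 2 := by
        rw [real_inner_smul_right]; linarith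
    _ ≤ V (w + α • g) := add_inner_gradient_sub_le_of_lipschitz_gradient hV hLip w (α • g)

theorem half_mul_sum_sub_le_of_inexact_gradient_ascent {α δ : ℝ} (hV : Differentiable ℝ V)
    (hLip : ∀ x y, ‖gradient V x - gradient V y‖ ≤ L * ‖x - y‖)
    (hα0 : 0 ≤ α) (hαL : α * L ≤ 1) {w g : ℕ → E}
    (hupd : ∀ t, w (t + 1) = w t + α • g t) (hg : ∀ t, ‖g t - gradient V (w t)‖ ≤ δ) (T : ℕ) :
    α / 2 * ∑ t ∈ Finset.range T, (‖gradient V (w t)‖ ^ 2 - δ ^ 2) ≤ V (w T) - V (w 0) := by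
  rw [Finset.mul_sum, ← Finset.sum_range_sub (fun t => V (w t))]
  gcongr with t
  have hstep := add_half_mul_sub_le_of_inexact_gradient_step hV hLip hα0 hαL (hg t)
  rw [← hupd] at hstep
  linarith

end

theorem inexact_gradient_ascent_average_bound_general
    {E : Type*} [NormedAddCommGroup E] [InnerProductSpace ℝ E] [CompleteSpace E]
    (V : E → ℝ) (Ltil Vmax δ α : ℝ)
    (hV : Differentiable ℝ V)
    (hLip : ∀ x y, ‖gradient V x - gradient V y‖ ≤ Ltil * ‖x - y‖)
    (hVmax : ∀ w, V w ≤ Vmax)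
    (hα0 : 0 < α) (hα : α ≤ 1 / (4 * Ltil))
    (w g : ℕ → E)
    (hupd : ∀ t : ℕ, w (t + 1) = w t + α • g t)
    (hg : ∀ t : ℕ, ‖g t - gradient V (w t)‖ ≤ δ) :
    ∀ T : ℕ, 0 < T →
      (1 / (T : ℝ)) * ∑ t ∈ Finset.range T, ‖gradient V (w t)‖ ^ 2
        ≤ 4 * (Vmax - V (w 0)) / (α * T) + 3 * δ ^ 2 := by
  intro T hT
  have hL : 0 < Ltil := by
    by_contra! hL
    linarith [one_div_nonpos.2 (by linarith : 4 * Ltil ≤ 0)]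
  have hαL : α * Ltil ≤ 1 := by
    have := (le_div_iff₀ (by positivity : 0 < 4 * Ltil)).1 hα
    linarith
  have hsum := half_mul_sum_sub_le_of_inexact_gradient_ascent hV hLip hα0.le hαL hupd hg T
  rw [Finset.sum_sub_distrib, Finset.sum_const, Finset.card_range, nsmul_eq_mul] at hsum
  have key : α * ∑ t ∈ Finset.range T, ‖gradient V (w t)‖ ^ 2
      ≤ 2 * (Vmax - V (w 0)) + α * T * δ ^ 2 := by
    linarith [hVmax (w T)]
  have hT' : (0 : ℝ) < T := by exact_mod_cast hT
  have hgap : 0 ≤ Vmax - V (w 0) := sub_nonneg.2 (hVmax _)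
  rw [one_div_mul_eq_div, div_add' _ _ _ (by positivity), div_le_div_iff₀ hT' (by positivity)]
  nlinarith [mul_le_mul_of_nonneg_right key hT'.le, mul_nonneg hgap hT'.le,
    mul_nonneg (mul_nonneg hα0.le (sq_nonneg δ)) (sq_nonneg (T : ℝ))]

/-- Average stationarity bound for inexact gradient ascent on an `L̃`-smooth
function bounded above: for step size `0 < α ≤ 1/(4L̃)` and bias `δ`,
`(1/T) Σ_{t<T} ‖∇V(w^t)‖² ≤ 4(V_max − V(w⁰))/(αT) + 3δ²`. -/
theorem inexact_gradient_ascent_average_bound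
    {E : Type*} [NormedAddCommGroup E] [InnerProductSpace ℝ E] [CompleteSpace E]
    (V : E → ℝ) (Ltil Vmax δ α : ℝ) (hLtil : 0 < Ltil)
    (hV : Differentiable ℝ V)
    (hLip : ∀ x y, ‖gradient V x - gradient V y‖ ≤ Ltil * ‖x - y‖)
    (hVmax : ∀ w, V w ≤ Vmax)
    (hδ : 0 ≤ δ) (hα0 : 0 < α) (hα : α ≤ 1 / (4 * Ltil))
    (w g : ℕ → E)
    (hupd : ∀ t : ℕ, w (t + 1) = w t + α • g t)
    (hg : ∀ t : ℕ, ‖g t - gradient V (w t)‖ ≤ δ) :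
    ∀ T : ℕ, 0 < T →
      (1 / (T : ℝ)) * ∑ t ∈ Finset.range T, ‖gradient V (w t)‖ ^ 2
        ≤ 4 * (Vmax - V (w 0)) / (α * T) + 3 * δ ^ 2 :=
  inexact_gradient_ascent_average_bound_general V Ltil Vmax δ α hV hLip hVmax hα0 hα w g hupd hg
end

section
/- Policy gradient identity for a finite-horizon finite MDP: with the finite-MDP setup below, the value function J(w) = Σ_τ q(τ; w) R(τ) is differentiable in w, and its gradient equals the score-weighted reward-to-go sum: ∇J(w) = Σ_τ q(τ; w) Σ_{h=0}^{H−1} ∇_w log π(a_h | s_h; w) · R^h(τ), where the sums over τ range over all trajectories (a finite set). -/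
/-!
Write `q(τ; w) = μ(s₀) ∏ₕ π(aₕ | sₕ; w) ∏ₕ P(sₕ₊₁ | sₕ, aₕ)`. Since `π = exp ∘ log π`, the
likelihood-ratio trick gives `∇q = q · Σₕ ∇ log π(aₕ | sₕ)`, hence
`∇J = Σ_τ q R Σₕ ∇ log π(aₕ | sₕ)`. Causality removes the rewards collected before time `h`:
for `l < h`, summing out the trajectory after `sₕ` leaves the factor
`Σₐ π(a | sₕ) ∇ log π(a | sₕ) = ∇ Σₐ π(a | sₕ) = 0`, so the reward `r(s_l, a_l)` is
uncorrelated with the score at time `h`, and only the reward-to-go `Rʰ` survives.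
-/

open Finset

theorem Fin.sum_univ_pi_snoc {X M : Type*} [Fintype X] [AddCommMonoid M] {n : ℕ}
    (F : (Fin (n + 1) → X) → M) : ∑ s, F s = ∑ s : Fin n → X, ∑ x, F (Fin.snoc s x) := by
  rw [← (Fin.snocEquiv fun _ => X).sum_comp, Fintype.sum_prod_type, Finset.sum_comm]
  rfl

section Trajectory

variable {S A : Type*}

theorem sum_sum_snoc [Fintype S] [Fintype A] {M : Type*} [AddCommMonoid M] {n : ℕ}
    (F : (Fin (n + 2) → S) → (Fin (n + 1) → A) → M) :
    ∑ s, ∑ a, F s a = ∑ s, ∑ a, ∑ y, ∑ x, F (Fin.snoc s x) (Fin.snoc a y) := by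
  rw [Fin.sum_univ_pi_snoc]
  refine sum_congr rfl fun s _ => ?_
  refine (sum_congr rfl fun x _ => Fin.sum_univ_pi_snoc (F (Fin.snoc s x))).trans ?_
  rw [sum_comm]
  exact sum_congr rfl fun a _ => sum_comm

def trajWeight (ν : S → ℝ) (p : A → S → ℝ) (P : S → A → S → ℝ) {n : ℕ}
    (s : Fin (n + 1) → S) (a : Fin n → A) : ℝ :=
  ν (s 0) * (∏ j, p (a j) (s j.castSucc)) * ∏ j, P (s j.castSucc) (a j) (s j.succ)

theorem trajWeight_snoc (ν : S → ℝ) (p : A → S → ℝ) (P : S → A → S → ℝ) {n : ℕ}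
    (s : Fin (n + 1) → S) (a : Fin n → A) (x : S) (y : A) :
    trajWeight ν p P (Fin.snoc s x : Fin (n + 2) → S) (Fin.snoc a y : Fin (n + 1) → A) =
      trajWeight ν p P s a * (p y (s (Fin.last n)) * P (s (Fin.last n)) y x) := by
  simp only [trajWeight, Fin.prod_univ_castSucc, Fin.snoc_castSucc, Fin.snoc_last,
    Fin.succ_last, Fin.succ_castSucc]
  rw [show (0 : Fin (n + 2)) = (0 : Fin (n + 1)).castSucc from rfl, Fin.snoc_castSucc]
  ring

theorem sum_sum_mul_eq_one [Fintype S] [Fintype A] (p : A → S → ℝ) (P : S → A → S → ℝ)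
    (hp : ∀ s, ∑ a, p a s = 1) (hP : ∀ s a, ∑ s', P s a s' = 1) (s : S) :
    ∑ a, ∑ s', p a s * P s a s' = 1 := by
  simp only [← mul_sum, hP, mul_one, hp]

theorem sum_trajWeight_mul_smul_eq_zero [Fintype S] [Fintype A] {E : Type*} [AddCommGroup E]
    [Module ℝ E] (ν : S → ℝ) (p : A → S → ℝ) (P : S → A → S → ℝ)
    (hp : ∀ s, ∑ a, p a s = 1) (hP : ∀ s a, ∑ s', P s a s' = 1)
    (f : S → A → ℝ) (g : A → S → E) (hg : ∀ s, ∑ a, p a s • g a s = 0) :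
    ∀ {n : ℕ} (l h : Fin n), l < h →
      ∑ s : Fin (n + 1) → S, ∑ a : Fin n → A,
        (trajWeight ν p P s a * f (s l.castSucc) (a l)) • g (a h) (s h.castSucc) = 0 := by
  intro n
  induction n with
  | zero => exact fun l => l.elim0
  | succ m ih =>
    intro l h hlh
    obtain ⟨l, rfl⟩ : ∃ l' : Fin m, l'.castSucc = l :=
      Fin.exists_castSucc_eq.2 (Fin.ne_last_of_lt hlh)
    simp only [sum_sum_snoc, trajWeight_snoc, Fin.snoc_castSucc]
    induction h using Fin.lastCases with
    | last =>
      -- the action at the last step is drawn from `p`, against which `g` has mean zero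
      refine sum_eq_zero fun s _ => sum_eq_zero fun a _ => ?_
      simp only [Fin.snoc_last]
      calc ∑ y, ∑ x, (trajWeight ν p P s a * (p y (s (Fin.last m)) * P (s (Fin.last m)) y x) *
              f (s l.castSucc) (a l)) • g y (s (Fin.last m))
          = ∑ y, (trajWeight ν p P s a * f (s l.castSucc) (a l)) •
              (p y (s (Fin.last m)) • g y (s (Fin.last m))) := by
            refine sum_congr rfl fun y _ => ?_
            rw [← sum_smul, smul_smul]
            congr 1
            simp only [← sum_mul, ← mul_sum, hP, mul_one]
            ring
        _ = 0 := by rw [← smul_sum, hg, smul_zero]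
    | cast h =>
      rw [← ih l h (Fin.castSucc_lt_castSucc_iff.1 hlh)]
      refine sum_congr rfl fun s _ => sum_congr rfl fun a _ => ?_
      simp only [Fin.snoc_castSucc, ← sum_smul]
      congr 1
      calc ∑ y, ∑ x, trajWeight ν p P s a * (p y (s (Fin.last m)) * P (s (Fin.last m)) y x) *
            f (s l.castSucc) (a l)
          = trajWeight ν p P s a * f (s l.castSucc) (a l) *
              ∑ y, ∑ x, p y (s (Fin.last m)) * P (s (Fin.last m)) y x := by
            simp only [mul_sum]
            exact sum_congr rfl fun _ _ => sum_congr rfl fun _ _ => by ring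
        _ = trajWeight ν p P s a * f (s l.castSucc) (a l) := by
            rw [sum_sum_mul_eq_one p P hp hP, mul_one]

end Trajectory

section LogDerivative

variable {F : Type*} [NormedAddCommGroup F] [NormedSpace ℝ F] {w : F}

theorem hasFDerivAt_of_differentiableAt_log {f : F → ℝ} (hf : ∀ v, 0 < f v)
    (hd : DifferentiableAt ℝ (fun v => Real.log (f v)) w) :
    HasFDerivAt f (f w • fderiv ℝ (fun v => Real.log (f v)) w) w := by
  have hexp : (fun v => Real.exp (Real.log (f v))) = f := funext fun v => Real.exp_log (hf v)
  simpa only [hexp, Real.exp_log (hf w)] using hd.hasFDerivAt.exp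

theorem hasFDerivAt_prod_of_differentiableAt_log {ι : Type*} (t : Finset ι) {f : ι → F → ℝ}
    (hf : ∀ i v, 0 < f i v) (hd : ∀ i, DifferentiableAt ℝ (fun v => Real.log (f i v)) w) :
    HasFDerivAt (fun v => ∏ i ∈ t, f i v)
      ((∏ i ∈ t, f i w) • ∑ i ∈ t, fderiv ℝ (fun v => Real.log (f i v)) w) w := by
  have hlog : (fun v => Real.log (∏ i ∈ t, f i v)) = fun v => ∑ i ∈ t, Real.log (f i v) :=
    funext fun v => Real.log_prod fun i _ => (hf i v).ne'
  have hd' : DifferentiableAt ℝ (fun v => Real.log (∏ i ∈ t, f i v)) w := by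
    rw [hlog]
    exact DifferentiableAt.fun_sum fun i _ => hd i
  have h := hasFDerivAt_of_differentiableAt_log (fun v => prod_pos fun i _ => hf i v) hd'
  rwa [hlog, fderiv_fun_sum fun i _ => hd i] at h

theorem hasFDerivAt_trajWeight {S A : Type*} (ν : S → ℝ) (π : A → S → F → ℝ)
    (P : S → A → S → ℝ) (hπ : ∀ a s v, 0 < π a s v)
    (hd : ∀ a s, DifferentiableAt ℝ (fun v => Real.log (π a s v)) w)
    {n : ℕ} (s : Fin (n + 1) → S) (a : Fin n → A) :
    HasFDerivAt (fun v => trajWeight ν (fun a s => π a s v) P s a)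
      (trajWeight ν (fun a s => π a s w) P s a •
        ∑ j, fderiv ℝ (fun v => Real.log (π (a j) (s j.castSucc) v)) w) w := by
  have h := ((hasFDerivAt_prod_of_differentiableAt_log univ (fun j v => hπ _ _ v)
    (fun j => hd (a j) (s j.castSucc))).const_mul (ν (s 0))).mul_const
      (∏ j, P (s j.castSucc) (a j) (s j.succ))
  refine h.congr_fderiv ?_
  rw [smul_smul, smul_smul, trajWeight]
  congr 1
  ring

end LogDerivative

theorem sum_smul_gradient_log_eq_zero {F : Type*} [NormedAddCommGroup F] [InnerProductSpace ℝ F]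
    [CompleteSpace F] {w : F} {ι : Type*} [Fintype ι] {f : ι → F → ℝ} (hf : ∀ i v, 0 < f i v)
    (h1 : ∀ v, ∑ i, f i v = 1) (hd : ∀ i, DifferentiableAt ℝ (fun v => Real.log (f i v)) w) :
    ∑ i, f i w • gradient (fun v => Real.log (f i v)) w = 0 := by
  have hsum : HasFDerivAt (fun v => ∑ i, f i v)
      (∑ i, f i w • fderiv ℝ (fun v => Real.log (f i v)) w) w :=
    HasFDerivAt.fun_sum fun i _ => hasFDerivAt_of_differentiableAt_log (hf i) (hd i)
  rw [funext h1] at hsum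
  apply (InnerProductSpace.toDual ℝ F).injective
  simp only [map_sum, map_smulₛₗ, conj_trivial, toDual_gradient, map_zero]
  exact hsum.unique (hasFDerivAt_const 1 w)

theorem sum_mul_sum_smul_sum_eq_of_causal {T ι E : Type*} [Fintype T] [Fintype ι]
    [LinearOrder ι] [AddCommGroup E] [Module ℝ E] (q : T → ℝ) (c : ι → T → ℝ) (G : ι → T → E)
    (hcausal : ∀ l h, l < h → ∑ τ, (q τ * c l τ) • G h τ = 0) :
    ∑ τ, (q τ * ∑ l, c l τ) • ∑ h, G h τ =
      ∑ τ, q τ • ∑ h, (∑ l ∈ univ.filter (h ≤ ·), c l τ) • G h τ := by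
  have hpast : ∀ h, ∑ l ∈ univ.filter (¬ h ≤ ·), ∑ τ, (q τ * c l τ) • G h τ = 0 := fun h =>
    sum_eq_zero fun l hl => hcausal l h (not_le.1 (mem_filter.1 hl).2)
  calc ∑ τ, (q τ * ∑ l, c l τ) • ∑ h, G h τ
      = ∑ h, ∑ l, ∑ τ, (q τ * c l τ) • G h τ := by
        simp only [mul_sum, sum_smul, smul_sum]
        rw [sum_comm]
        exact sum_congr rfl fun h _ => sum_comm
    _ = ∑ h, ∑ l ∈ univ.filter (h ≤ ·), ∑ τ, (q τ * c l τ) • G h τ := by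
        refine sum_congr rfl fun h _ => ?_
        rw [← sum_filter_add_sum_filter_not univ (h ≤ ·), hpast, add_zero]
    _ = ∑ τ, q τ • ∑ h, (∑ l ∈ univ.filter (h ≤ ·), c l τ) • G h τ := by
        simp only [smul_sum, sum_smul, smul_smul]
        rw [sum_comm]
        exact sum_congr rfl fun h _ => sum_comm

theorem policy_gradient_identity_general
    (S A : Type*) [Fintype S] [Fintype A]
    (H d : ℕ)
    (μ : S → ℝ)
    (P : S → A → S → ℝ)
    (hP1 : ∀ s a, ∑ s', P s a s' = 1)
    (r : S → A → ℝ) (γ : ℝ)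
    (π : A → S → EuclideanSpace ℝ (Fin d) → ℝ)
    (hπ0 : ∀ a s w, 0 < π a s w) (hπ1 : ∀ s w, ∑ a, π a s w = 1)
    (hπC : ∀ a s, ContDiff ℝ 1 (fun w => Real.log (π a s w)))
    (q : ((Fin (H + 1) → S) × (Fin H → A)) → EuclideanSpace ℝ (Fin d) → ℝ)
    (hq : ∀ τ w, q τ w =
      μ (τ.1 0) * (∏ h : Fin H, π (τ.2 h) (τ.1 h.castSucc) w)
        * ∏ h : Fin H, P (τ.1 h.castSucc) (τ.2 h) (τ.1 h.succ))
    (Rew : ((Fin (H + 1) → S) × (Fin H → A)) → ℝ)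
    (hRew : ∀ τ, Rew τ = ∑ h : Fin H, γ ^ (h : ℕ) * r (τ.1 h.castSucc) (τ.2 h))
    (Rtg : Fin H → ((Fin (H + 1) → S) × (Fin H → A)) → ℝ)
    (hRtg : ∀ h τ, Rtg h τ =
      ∑ l ∈ Finset.univ.filter (fun l : Fin H => h ≤ l),
        γ ^ (l : ℕ) * r (τ.1 l.castSucc) (τ.2 l))
    (J : EuclideanSpace ℝ (Fin d) → ℝ)
    (hJ : ∀ w, J w = ∑ τ : (Fin (H + 1) → S) × (Fin H → A), q τ w * Rew τ) :
    Differentiable ℝ J ∧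
      ∀ w : EuclideanSpace ℝ (Fin d),
        gradient J w = ∑ τ : (Fin (H + 1) → S) × (Fin H → A),
          q τ w • ∑ h : Fin H,
            Rtg h τ •
              gradient (fun v => Real.log (π (τ.2 h) (τ.1 h.castSucc) v)) w := by
  have hlog : ∀ a s w, DifferentiableAt ℝ (fun v => Real.log (π a s v)) w := fun a s =>
    (hπC a s).differentiable one_ne_zero
  have hq' : q = fun τ w => trajWeight μ (fun a s => π a s w) P τ.1 τ.2 := funext₂ hq
  have hJgrad : ∀ w, HasGradientAt J (∑ τ, (q τ w * Rew τ) •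
      ∑ h, gradient (fun v => Real.log (π (τ.2 h) (τ.1 h.castSucc) v)) w) w := by
    intro w
    rw [hasGradientAt_iff_hasFDerivAt, funext hJ, hq']
    simp only [map_sum, map_smulₛₗ, conj_trivial, toDual_gradient]
    refine HasFDerivAt.fun_sum fun τ _ => ?_
    have hτ := (hasFDerivAt_trajWeight μ π P hπ0 (hlog · · w) τ.1 τ.2).mul_const (Rew τ)
    rwa [smul_smul, mul_comm] at hτ
  refine ⟨fun w => (hJgrad w).differentiableAt, fun w => ?_⟩
  rw [(hJgrad w).gradient, funext hRew, funext₂ hRtg]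
  refine sum_mul_sum_smul_sum_eq_of_causal _ _ _ fun l h hlh => ?_
  rw [Fintype.sum_prod_type, hq']
  exact sum_trajWeight_mul_smul_eq_zero μ (fun a s => π a s w) P (hπ1 · w) hP1
    (fun s a => γ ^ (l : ℕ) * r s a) _ (fun s => sum_smul_gradient_log_eq_zero (hπ0 · s) (hπ1 s)
      fun a => hlog a s w) l h hlh

/-- Policy gradient identity for a finite-horizon finite MDP:
`∇J(w) = Σ_τ q(τ;w) Σ_h ∇_w log π(a_h|s_h;w) · R^h(τ)`. -/
theorem policy_gradient_identity
    (S A : Type*) [Fintype S] [Fintype A] [Nonempty S] [Nonempty A]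
    (H d : ℕ) (hH : 0 < H) (hd : 0 < d)
    (μ : S → ℝ) (hμ0 : ∀ s, 0 ≤ μ s) (hμ1 : ∑ s, μ s = 1)
    (P : S → A → S → ℝ) (hP0 : ∀ s a s', 0 ≤ P s a s')
    (hP1 : ∀ s a, ∑ s', P s a s' = 1)
    (r : S → A → ℝ) (γ : ℝ) (hγ0 : 0 < γ) (hγ1 : γ < 1)
    (π : A → S → EuclideanSpace ℝ (Fin d) → ℝ)
    (hπ0 : ∀ a s w, 0 < π a s w) (hπ1 : ∀ s w, ∑ a, π a s w = 1)
    (hπC : ∀ a s, ContDiff ℝ 1 (fun w => Real.log (π a s w)))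
    (q : ((Fin (H + 1) → S) × (Fin H → A)) → EuclideanSpace ℝ (Fin d) → ℝ)
    (hq : ∀ τ w, q τ w =
      μ (τ.1 0) * (∏ h : Fin H, π (τ.2 h) (τ.1 h.castSucc) w)
        * ∏ h : Fin H, P (τ.1 h.castSucc) (τ.2 h) (τ.1 h.succ))
    (Rew : ((Fin (H + 1) → S) × (Fin H → A)) → ℝ)
    (hRew : ∀ τ, Rew τ = ∑ h : Fin H, γ ^ (h : ℕ) * r (τ.1 h.castSucc) (τ.2 h))
    (Rtg : Fin H → ((Fin (H + 1) → S) × (Fin H → A)) → ℝ)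
    (hRtg : ∀ h τ, Rtg h τ =
      ∑ l ∈ Finset.univ.filter (fun l : Fin H => h ≤ l),
        γ ^ (l : ℕ) * r (τ.1 l.castSucc) (τ.2 l))
    (J : EuclideanSpace ℝ (Fin d) → ℝ)
    (hJ : ∀ w, J w = ∑ τ : (Fin (H + 1) → S) × (Fin H → A), q τ w * Rew τ) :
    Differentiable ℝ J ∧
      ∀ w : EuclideanSpace ℝ (Fin d),
        gradient J w = ∑ τ : (Fin (H + 1) → S) × (Fin H → A),
          q τ w • ∑ h : Fin H,
            Rtg h τ •
              gradient (fun v => Real.log (π (τ.2 h) (τ.1 h.castSucc) v)) w :=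
  policy_gradient_identity_general S A H d μ P hP1 r γ π hπ0 hπ1 hπC q hq Rew hRew Rtg hRtg J hJ
end
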